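/- The three-dimensional crumbling map commutes with the boundary and the intersection product: for every k ≥ 1, the ℚ-linear map ι₃ : E3_N → E3_{N·k} defined on basis triples by ι₃(u₁, u₂, u₃) = ι(u₁) ⊗ ι(u₂) ⊗ ι(u₃) satisfies ι₃(∂₃ x) = ∂₃(ι₃ x) and ι₃(μ₃(x, y)) = μ₃(ι₃ x, ι₃ y) for all x, y ∈ E3_N. -/

import Mathlib

/-- Basis elements of the one-dimensional enlarged complex of period `N`:
points `P a`, elemental sticks `S a` (the interval `[a, a+1]`), and
infinitesimal sticks `I a`. -/
inductive B (N : ℕ) : Type where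
  | P : ZMod N → B N
  | S : ZMod N → B N
  | I : ZMod N → B N
  deriving DecidableEq

/-- The enlarged one-dimensional chain complex: the free ℚ-vector space on `B N`. -/
abbrev EC (N : ℕ) : Type := B N →₀ ℚ

namespace B

variable {N : ℕ}

/-- Codimension: 1 for points, 0 for sticks and infinitesimal sticks. -/
def cod : B N → ℕ
  | P _ => 1
  | _ => 0

/-- Basis element viewed in `EC N`. -/
noncomputable def e (u : B N) : EC N := Finsupp.single u 1

/-- The transverse intersection product on basis elements. -/
noncomputable def muB : B N → B N → EC N
  | P _, P _ => 0
  | P a, S b => if b = a ∨ b = a - 1 then Finsupp.single (P a) (1/2) else 0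
  | S b, P a => if b = a ∨ b = a - 1 then Finsupp.single (P a) (1/2) else 0
  | P a, I b => if b = a then Finsupp.single (P a) (1/4) else 0
  | I b, P a => if b = a then Finsupp.single (P a) (1/4) else 0
  | S a, S b =>
      if b = a then
        Finsupp.single (I a) (-1) + Finsupp.single (S a) 1 + Finsupp.single (I (a+1)) (-1)
      else if b = a + 1 then Finsupp.single (I (a+1)) 1
      else if b = a - 1 then Finsupp.single (I a) 1
      else 0
  | S a, I b => if b = a ∨ b = a + 1 then Finsupp.single (I b) (1/2) else 0
  | I b, S a => if b = a ∨ b = a + 1 then Finsupp.single (I b) (1/2) else 0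
  | I a, I b => if b = a then Finsupp.single (I a) (1/4) else 0

/-- Boundary on basis elements: `∂ (S a) = P (a+1) - P a`, zero otherwise. -/
noncomputable def bdB : B N → EC N
  | S a => Finsupp.single (P (a+1)) 1 - Finsupp.single (P a) 1
  | _ => 0

/-- Augmentation on basis elements. -/
def epsB : B N → ℚ
  | P _ => 1
  | _ => 0

end B

/-- Bilinear extension of the basis product to `EC N`. -/
noncomputable def mu {N : ℕ} (x y : EC N) : EC N :=
  x.sum fun u cu => y.sum fun v cv => (cu * cv) • B.muB u v

/-- Linear extension of the boundary to `EC N`. -/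
noncomputable def bd {N : ℕ} (x : EC N) : EC N := x.sum fun u cu => cu • B.bdB u

/-- Augmentation `ε : EC N → ℚ`. -/
noncomputable def eps {N : ℕ} (x : EC N) : ℚ := x.sum fun u cu => cu * B.epsB u

/-- The augmentation pairing `⟨x, y⟩ = ε (μ x y)`. -/
noncomputable def pair {N : ℕ} (x y : EC N) : ℚ := eps (mu x y)

/-- The subcomplex `C_N` spanned by points and elemental sticks. -/
noncomputable def Csub (N : ℕ) : Submodule ℚ (EC N) :=
  Submodule.span ℚ
    (Set.range (fun a : ZMod N => Finsupp.single (B.P a) (1 : ℚ)) ∪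
     Set.range (fun a : ZMod N => Finsupp.single (B.S a) (1 : ℚ)))

/-- Basis triples for the three-dimensional complex. -/
abbrev B3 (N : ℕ) : Type := B N × B N × B N

/-- The enlarged three-dimensional chain complex: free ℚ-vector space on `B3 N`. -/
abbrev E3 (N : ℕ) : Type := B3 N →₀ ℚ

/-- Codimension of a basis triple. -/
def cod3 {N : ℕ} (u : B3 N) : ℕ := u.1.cod + u.2.1.cod + u.2.2.cod

/-- Basis triple viewed in `E3 N`. -/
noncomputable def e3 {N : ℕ} (u : B3 N) : E3 N := Finsupp.single u 1

/-- Trilinear map `EC N → EC N → EC N → E3 N`, `x ⊗ y ⊗ z`. -/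
noncomputable def t3 {N : ℕ} (x y z : EC N) : E3 N :=
  x.sum fun u₁ c₁ => y.sum fun u₂ c₂ => z.sum fun u₃ c₃ =>
    Finsupp.single (u₁, u₂, u₃) (c₁ * c₂ * c₃)

/-- The three-dimensional intersection product on basis triples, with Koszul sign. -/
noncomputable def mu3B {N : ℕ} (u v : B3 N) : E3 N :=
  ((-1 : ℚ) ^ (u.2.1.cod * v.1.cod + u.2.2.cod * v.1.cod + u.2.2.cod * v.2.1.cod)) •
    t3 (B.muB u.1 v.1) (B.muB u.2.1 v.2.1) (B.muB u.2.2 v.2.2)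

/-- Bilinear extension of the three-dimensional product to `E3 N`. -/
noncomputable def mu3 {N : ℕ} (x y : E3 N) : E3 N :=
  x.sum fun u cu => y.sum fun v cv => (cu * cv) • mu3B u v

/-- The three-dimensional boundary on basis triples. -/
noncomputable def bd3B {N : ℕ} (u : B3 N) : E3 N :=
  t3 (B.bdB u.1) (B.e u.2.1) (B.e u.2.2)
    + ((-1 : ℚ) ^ u.1.cod) • t3 (B.e u.1) (B.bdB u.2.1) (B.e u.2.2)
    + ((-1 : ℚ) ^ (u.1.cod + u.2.1.cod)) • t3 (B.e u.1) (B.e u.2.1) (B.bdB u.2.2)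

/-- Linear extension of the three-dimensional boundary to `E3 N`. -/
noncomputable def bd3 {N : ℕ} (x : E3 N) : E3 N := x.sum fun u cu => cu • bd3B u

/-- The three-dimensional augmentation `ε₃`. -/
noncomputable def eps3 {N : ℕ} (x : E3 N) : ℚ :=
  x.sum fun u cu => cu * (B.epsB u.1 * B.epsB u.2.1 * B.epsB u.2.2)

/-- The three-dimensional augmentation pairing. -/
noncomputable def pair3 {N : ℕ} (x y : E3 N) : ℚ := eps3 (mu3 x y)

/-- The well-defined map `ZMod N → ZMod (N·k)`, `[a] ↦ [k·a]`. -/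
def rho (N k : ℕ) (a : ZMod N) : ZMod (N * k) := ((k * a.val : ℕ) : ZMod (N * k))

/-- Crumbling on basis elements: points and infinitesimal sticks map to their images,
an elemental stick crumbles into `k` elemental sticks. -/
noncomputable def iotaB (N k : ℕ) : B N → EC (N * k)
  | .P a => Finsupp.single (.P (rho N k a)) 1
  | .I a => Finsupp.single (.I (rho N k a)) 1
  | .S a => ∑ j ∈ Finset.range k, Finsupp.single (.S (rho N k a + (j : ZMod (N * k)))) 1

/-- The crumbling chain map `EC N → EC (N·k)`. -/
noncomputable def iota (N k : ℕ) (x : EC N) : EC (N * k) :=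
  x.sum fun u cu => cu • iotaB N k u

/-- The three-dimensional crumbling chain map `E3 N → E3 (N·k)`. -/
noncomputable def iota3 (N k : ℕ) (x : E3 N) : E3 (N * k) :=
  x.sum fun u cu => cu • t3 (iotaB N k u.1) (iotaB N k u.2.1) (iotaB N k u.2.2)

/-! Crumbling `ι` preserves codimension, so the Koszul signs of `∂₃` and `μ₃` are the same
before and after crumbling. On decomposable tensors of homogeneous chains, `∂₃` satisfies the
graded Leibniz rule and `μ₃` multiplies factorwise up to exactly those signs; hence `ι ⊗ ι ⊗ ι`
commutes with `∂₃` and `μ₃` as soon as `ι` commutes with `∂` and `μ`.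

The one-dimensional statement is a computation on basis elements. The crumbs `S (ρ a + j)`,
`j < k`, of `S a` are pairwise distinct, each ends where the next begins, and the last one ends at
`ρ (a + 1)`. So `∂ (ι S a)` telescopes, and in `μ (ι S a) (ι S b)` only neighbouring crumbs meet:
for `b = a` the infinitesimal sticks at the interior vertices cancel, leaving
`-I (ρ a) + ι S a - I (ρ (a + 1))`, and for `b = a + 1` only the last crumb of `S a` meets the
first crumb of `S b`. -/

open Finsupp (linearCombination)

section Bundled

variable (M : ℕ)

noncomputable def bdL : EC M →ₗ[ℚ] EC M := linearCombination ℚ B.bdB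

noncomputable def muL : EC M →ₗ[ℚ] EC M →ₗ[ℚ] EC M :=
  linearCombination ℚ fun u => linearCombination ℚ (B.muB u)

noncomputable def t3L : EC M →ₗ[ℚ] EC M →ₗ[ℚ] EC M →ₗ[ℚ] E3 M :=
  linearCombination ℚ fun u₁ => linearCombination ℚ fun u₂ => linearCombination ℚ fun u₃ =>
    e3 (u₁, u₂, u₃)

noncomputable def bd3L : E3 M →ₗ[ℚ] E3 M := linearCombination ℚ bd3B

noncomputable def mu3L : E3 M →ₗ[ℚ] E3 M →ₗ[ℚ] E3 M :=
  linearCombination ℚ fun u => linearCombination ℚ (mu3B u)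

variable {M}

lemma linearCombination₂_apply {α β V : Type*} [AddCommGroup V] [Module ℚ V] (f : α → β → V)
    (x : α →₀ ℚ) (y : β →₀ ℚ) :
    linearCombination ℚ (fun a => linearCombination ℚ (f a)) x y
      = x.sum fun a c => y.sum fun b d => (c * d) • f a b := by
  simp [Finsupp.linearCombination_apply, Finsupp.sum, LinearMap.sum_apply, Finset.smul_sum,
    mul_smul]

lemma bd3_eq_bd3L (x : E3 M) : bd3 x = bd3L M x := (Finsupp.linearCombination_apply ℚ x).symm

lemma mu3_eq_mu3L (x y : E3 M) : mu3 x y = mu3L M x y := (linearCombination₂_apply _ x y).symm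

lemma t3_eq_t3L (x y z : EC M) : t3 x y z = t3L M x y z := by
  simp only [t3, t3L, e3, Finsupp.linearCombination_apply, Finsupp.sum, LinearMap.sum_apply,
    LinearMap.smul_apply, Finset.smul_sum, Finsupp.smul_single, smul_eq_mul, mul_one, mul_assoc]

@[simp] lemma bdL_single (u : B M) : bdL M (Finsupp.single u 1) = B.bdB u := by simp [bdL]

@[simp] lemma muL_single (u v : B M) :
    muL M (Finsupp.single u 1) (Finsupp.single v 1) = B.muB u v := by
  simp [muL]

@[simp] lemma t3L_single (u₁ u₂ u₃ : B M) :
    t3L M (Finsupp.single u₁ 1) (Finsupp.single u₂ 1) (Finsupp.single u₃ 1)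
      = Finsupp.single (u₁, u₂, u₃) 1 := by
  simp [t3L, e3]

@[simp] lemma bd3L_single (u : B3 M) : bd3L M (Finsupp.single u 1) = bd3B u := by simp [bd3L]

@[simp] lemma mu3L_single (u v : B3 M) :
    mu3L M (Finsupp.single u 1) (Finsupp.single v 1) = mu3B u v := by
  simp [mu3L]

end Bundled

theorem LinearMap.eqOn_span₃ {R M₁ M₂ M₃ P : Type*} [CommSemiring R] [AddCommMonoid M₁]
    [AddCommMonoid M₂] [AddCommMonoid M₃] [AddCommMonoid P] [Module R M₁] [Module R M₂]
    [Module R M₃] [Module R P] {f g : M₁ →ₗ[R] M₂ →ₗ[R] M₃ →ₗ[R] P}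
    {s₁ : Set M₁} {s₂ : Set M₂} {s₃ : Set M₃}
    (h : ∀ x ∈ s₁, ∀ y ∈ s₂, ∀ z ∈ s₃, f x y z = g x y z)
    {x : M₁} {y : M₂} {z : M₃} (hx : x ∈ Submodule.span R s₁) (hy : y ∈ Submodule.span R s₂)
    (hz : z ∈ Submodule.span R s₃) : f x y z = g x y z := by
  have h₃ : ∀ x ∈ s₁, ∀ y ∈ s₂, f x y z = g x y z := fun x hx y hy =>
    LinearMap.eqOn_span (h x hx y hy) hz
  have h₂ : ∀ x ∈ s₁, f x y z = g x y z := fun x hx =>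
    LinearMap.eqOn_span (f := (f x).flip z) (g := (g x).flip z) (h₃ x hx) hy
  exact LinearMap.eqOn_span (f := (f.flip y).flip z) (g := (g.flip y).flip z) h₂ hx

abbrev homog (M c : ℕ) : Submodule ℚ (EC M) := Finsupp.supported ℚ ℚ {w : B M | w.cod = c}

section Homogeneous

variable {M : ℕ}

lemma bd3L_t3L_of_mem_homog {c₁ c₂ c₃ : ℕ} {x y z : EC M}
    (hx : x ∈ homog M c₁) (hy : y ∈ homog M c₂) (hz : z ∈ homog M c₃) :
    bd3L M (t3L M x y z)
      = t3L M (bdL M x) y z + (-1 : ℚ) ^ c₁ • t3L M x (bdL M y) z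
        + (-1 : ℚ) ^ (c₁ + c₂) • t3L M x y (bdL M z) := by
  -- Both sides are trilinear in `(x, y, z)`; on basis vectors this is the definition of `bd3B`.
  rw [homog, Finsupp.supported_eq_span_single] at hx hy hz
  have := LinearMap.eqOn_span₃ (f := (t3L M).compr₂ (LinearMap.llcomp ℚ _ _ _ (bd3L M)))
    (g := t3L M ∘ₗ bdL M + (-1 : ℚ) ^ c₁ • (t3L M).compl₂ (bdL M)
      + (-1 : ℚ) ^ (c₁ + c₂) • (t3L M).compr₂ (LinearMap.lcomp ℚ _ (bdL M))) ?_ hx hy hz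
  · simpa using this
  rintro _ ⟨w₁, rfl, rfl⟩ _ ⟨w₂, rfl, rfl⟩ _ ⟨w₃, rfl, rfl⟩
  simp [bd3B, B.e, t3_eq_t3L]

lemma mu3L_t3L_t3L_of_mem_homog {c₁ c₂ c₃ d₁ d₂ d₃ : ℕ} {x₁ x₂ x₃ y₁ y₂ y₃ : EC M}
    (hx₁ : x₁ ∈ homog M c₁) (hx₂ : x₂ ∈ homog M c₂) (hx₃ : x₃ ∈ homog M c₃)
    (hy₁ : y₁ ∈ homog M d₁) (hy₂ : y₂ ∈ homog M d₂) (hy₃ : y₃ ∈ homog M d₃) :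
    mu3L M (t3L M x₁ x₂ x₃) (t3L M y₁ y₂ y₃)
      = (-1 : ℚ) ^ (c₂ * d₁ + c₃ * d₁ + c₃ * d₂) •
          t3L M (muL M x₁ y₁) (muL M x₂ y₂) (muL M x₃ y₃) := by
  -- Trilinearity in the `y`s, then in the `x`s, reduces this to the definition of `mu3B`.
  rw [homog, Finsupp.supported_eq_span_single] at hx₁ hx₂ hx₃ hy₁ hy₂ hy₃
  have on_basis : ∀ w₁ w₂ w₃ : B M, w₁.cod = c₁ → w₂.cod = c₂ → w₃.cod = c₃ →
      mu3L M (Finsupp.single (w₁, w₂, w₃) 1) (t3L M y₁ y₂ y₃)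
        = (-1 : ℚ) ^ (c₂ * d₁ + c₃ * d₁ + c₃ * d₂) •
            t3L M (muL M (Finsupp.single w₁ 1) y₁) (muL M (Finsupp.single w₂ 1) y₂)
              (muL M (Finsupp.single w₃ 1) y₃) := by
    rintro w₁ w₂ w₃ rfl rfl rfl
    have := LinearMap.eqOn_span₃
      (f := (t3L M).compr₂ (LinearMap.llcomp ℚ _ _ _ (mu3L M (Finsupp.single (w₁, w₂, w₃) 1))))
      (g := (-1 : ℚ) ^ (w₂.cod * d₁ + w₃.cod * d₁ + w₃.cod * d₂) •
        ((t3L M).compl₁₂ (muL M (Finsupp.single w₁ 1)) (muL M (Finsupp.single w₂ 1))).compr₂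
          (LinearMap.lcomp ℚ _ (muL M (Finsupp.single w₃ 1)))) ?_ hy₁ hy₂ hy₃
    · simpa using this
    rintro _ ⟨v₁, rfl, rfl⟩ _ ⟨v₂, rfl, rfl⟩ _ ⟨v₃, rfl, rfl⟩
    simp [mu3B, t3_eq_t3L]
  have := LinearMap.eqOn_span₃
    (f := (t3L M).compr₂ (LinearMap.llcomp ℚ _ _ _ ((mu3L M).flip (t3L M y₁ y₂ y₃))))
    (g := (-1 : ℚ) ^ (c₂ * d₁ + c₃ * d₁ + c₃ * d₂) •
      ((t3L M).compl₁₂ ((muL M).flip y₁) ((muL M).flip y₂)).compr₂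
        (LinearMap.lcomp ℚ _ ((muL M).flip y₃))) ?_ hx₁ hx₂ hx₃
  · simpa using this
  rintro _ ⟨w₁, hw₁, rfl⟩ _ ⟨w₂, hw₂, rfl⟩ _ ⟨w₃, hw₃, rfl⟩
  simpa using on_basis w₁ w₂ w₃ hw₁ hw₂ hw₃

end Homogeneous

section TensorCube

variable {N M : ℕ} (φ : EC N →ₗ[ℚ] EC M)

noncomputable def map3 : E3 N →ₗ[ℚ] E3 M :=
  linearCombination ℚ fun u =>
    t3L M (φ (Finsupp.single u.1 1)) (φ (Finsupp.single u.2.1 1)) (φ (Finsupp.single u.2.2 1))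

@[simp] lemma map3_single (u : B3 N) :
    map3 φ (Finsupp.single u 1)
      = t3L M (φ (Finsupp.single u.1 1)) (φ (Finsupp.single u.2.1 1))
          (φ (Finsupp.single u.2.2 1)) := by
  simp [map3]

lemma map3_t3L (x y z : EC N) : map3 φ (t3L N x y z) = t3L M (φ x) (φ y) (φ z) := by
  have : (t3L N).compr₂ (LinearMap.llcomp ℚ _ _ _ (map3 φ))
      = ((t3L M).compl₁₂ φ φ).compr₂ (LinearMap.lcomp ℚ _ φ) := by
    ext u₁ u₂ u₃ : 6
    simp
  simpa using congr($this x y z)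

variable {φ}

theorem map3_bd3L (hcod : ∀ u : B N, φ (Finsupp.single u 1) ∈ homog M u.cod)
    (hbd : ∀ x, φ (bdL N x) = bdL M (φ x)) (x : E3 N) :
    map3 φ (bd3L N x) = bd3L M (map3 φ x) := by
  suffices map3 φ ∘ₗ bd3L N = bd3L M ∘ₗ map3 φ from congr($this x)
  ext ⟨u₁, u₂, u₃⟩ : 2
  have hbd' (u : B N) : φ (B.bdB u) = bdL M (φ (Finsupp.single u 1)) := by
    simpa using hbd (Finsupp.single u 1)
  simp only [LinearMap.comp_apply, Finsupp.lsingle_apply, bd3L_single, map3_single]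
  rw [bd3L_t3L_of_mem_homog (hcod u₁) (hcod u₂) (hcod u₃)]
  simp [bd3B, B.e, t3_eq_t3L, map3_t3L, hbd']

theorem map3_mu3L (hcod : ∀ u : B N, φ (Finsupp.single u 1) ∈ homog M u.cod)
    (hmu : ∀ x y, φ (muL N x y) = muL M (φ x) (φ y)) (x y : E3 N) :
    map3 φ (mu3L N x y) = mu3L M (map3 φ x) (map3 φ y) := by
  suffices (mu3L N).compr₂ (map3 φ) = (mu3L M).compl₁₂ (map3 φ) (map3 φ) from congr($this x y)
  ext ⟨u₁, u₂, u₃⟩ ⟨v₁, v₂, v₃⟩ : 4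
  have hmu' (u v : B N) :
      φ (B.muB u v) = muL M (φ (Finsupp.single u 1)) (φ (Finsupp.single v 1)) := by
    simpa using hmu (Finsupp.single u 1) (Finsupp.single v 1)
  simp only [LinearMap.compr₂_apply, LinearMap.compl₁₂_apply, LinearMap.comp_apply,
    Finsupp.lsingle_apply, mu3L_single, map3_single]
  rw [mu3L_t3L_t3L_of_mem_homog (hcod u₁) (hcod u₂) (hcod u₃) (hcod v₁) (hcod v₂) (hcod v₃)]
  simp [mu3B, t3_eq_t3L, map3_t3L, hmu']

end TensorCube

lemma ZMod.add_one_ne_self {N : ℕ} (hN : 2 ≤ N) (a : ZMod N) : a + 1 ≠ a := by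
  rw [Ne, add_eq_left, ← Nat.cast_one, ZMod.natCast_eq_zero_iff]
  exact Nat.not_dvd_of_pos_of_lt one_pos (by omega)

lemma ZMod.two_ne_zero_of_three_le {N : ℕ} (hN : 3 ≤ N) : (2 : ZMod N) ≠ 0 := by
  rw [Ne, ← Nat.cast_ofNat, ZMod.natCast_eq_zero_iff]
  exact Nat.not_dvd_of_pos_of_lt two_pos (by omega)

namespace B

variable {M : ℕ}

lemma muB_S_S (hM : 3 ≤ M) (x y : ZMod M) :
    muB (S x) (S y)
      = (if y = x then Finsupp.single (I x) (-1) + Finsupp.single (S x) 1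
            + Finsupp.single (I (x + 1)) (-1) else 0)
        + (if y = x + 1 then Finsupp.single (I (x + 1)) 1 else 0)
        + (if y + 1 = x then Finsupp.single (I x) 1 else 0) := by
  have : Fact (1 < M) := ⟨by omega⟩
  have h₂ := ZMod.two_ne_zero_of_three_le hM
  simp only [muB, eq_sub_iff_add_eq]
  by_cases h : y = x
  · subst h
    simp
  by_cases h' : y = x + 1
  · subst h'
    simp [add_assoc, one_add_one_eq_two, h₂]
  simp [h, h']

lemma muB_comm (hM : 3 ≤ M) (u v : B M) : muB u v = muB v u := by
  have : Fact (1 < M) := ⟨by omega⟩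
  have h₂ := ZMod.two_ne_zero_of_three_le hM
  rcases u with a | a | a <;> rcases v with b | b | b <;> try rfl
  · rw [muB_S_S hM, muB_S_S hM]
    by_cases hab : b = a
    · subst hab
      rfl
    by_cases hsucc : b = a + 1
    · subst hsucc
      simp [add_assoc, one_add_one_eq_two, h₂]
    by_cases hpred : b + 1 = a
    · subst hpred
      simp [add_assoc, one_add_one_eq_two, h₂]
    simp [hab, Ne.symm hab, hsucc, Ne.symm hsucc, hpred, Ne.symm hpred]
  · simp only [muB]
    by_cases hab : b = a
    · subst hab
      rfl
    rw [if_neg hab, if_neg (Ne.symm hab)]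

end B

lemma muL_comm {M : ℕ} (hM : 3 ≤ M) (x y : EC M) : muL M x y = muL M y x := by
  suffices muL M = (muL M).flip from congr($this x y)
  ext u v : 4
  simp [B.muB_comm hM]

section Crumbs

variable {N k : ℕ}

lemma natCast_mul_mod_eq_natCast_mul (m : ℕ) :
    ((k * (m % N) : ℕ) : ZMod (N * k)) = ((k * m : ℕ) : ZMod (N * k)) := by
  rw [ZMod.natCast_eq_natCast_iff, mul_comm N]
  exact (Nat.mod_modEq m N).mul_left' k

lemma rho_add [NeZero N] (a b : ZMod N) : rho N k (a + b) = rho N k a + rho N k b := by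
  simp only [rho, ZMod.val_add, natCast_mul_mod_eq_natCast_mul]
  push_cast
  ring

lemma rho_one : rho N k 1 = k := by
  rw [rho, ZMod.val_one_eq_one_mod, natCast_mul_mod_eq_natCast_mul, mul_one]

lemma rho_add_natCast_inj [NeZero N] {a b : ZMod N} {i j : ℕ} (hi : i < k) (hj : j < k) :
    rho N k a + i = rho N k b + j ↔ a = b ∧ i = j := by
  refine ⟨fun h => ?_, fun ⟨hab, hij⟩ => hab ▸ hij ▸ rfl⟩
  have hlt (c : ZMod N) (m : ℕ) (hm : m < k) : k * c.val + m < N * k := by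
    nlinarith [c.val_lt]
  have hcast : ((k * a.val + i : ℕ) : ZMod (N * k)) = ((k * b.val + j : ℕ) : ZMod (N * k)) := by
    simpa [rho] using h
  rw [ZMod.natCast_eq_natCast_iff', Nat.mod_eq_of_lt (hlt a i hi),
    Nat.mod_eq_of_lt (hlt b j hj)] at hcast
  have hval : a.val = b.val := by
    rcases lt_trichotomy a.val b.val with hab | hab | hab
    · nlinarith
    · exact hab
    · nlinarith
  exact ⟨ZMod.val_injective N hval, by rw [hval] at hcast; omega⟩

lemma rho_add_natCast_add_one_eq_iff [NeZero N] {a b : ZMod N} {i j : ℕ} (hi : i < k)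
    (hj : j < k) :
    rho N k a + i + 1 = rho N k b + j ↔ (a = b ∧ j = i + 1) ∨ (b = a + 1 ∧ i = k - 1 ∧ j = 0) := by
  rcases Nat.lt_or_ge (i + 1) k with hik | hik
  · rw [add_assoc, ← Nat.cast_add_one, rho_add_natCast_inj hik hj]
    constructor
    · rintro ⟨rfl, rfl⟩
      exact Or.inl ⟨rfl, rfl⟩
    · rintro (⟨rfl, rfl⟩ | ⟨-, hi', -⟩)
      · exact ⟨rfl, rfl⟩
      · omega
  · have hlast : rho N k a + i + 1 = rho N k (a + 1) + (0 : ℕ) := by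
      rw [rho_add, rho_one, Nat.cast_zero, add_zero, add_assoc, ← Nat.cast_add_one,
        show i + 1 = k by omega]
    rw [hlast, rho_add_natCast_inj (by omega) hj]
    constructor
    · rintro ⟨rfl, rfl⟩
      exact Or.inr ⟨rfl, by omega, rfl⟩
    · rintro (⟨-, hj'⟩ | ⟨rfl, -, rfl⟩)
      · omega
      · exact ⟨rfl, rfl⟩

lemma rho_inj [NeZero N] (hk : 0 < k) {a b : ZMod N} : rho N k a = rho N k b ↔ a = b := by
  simpa using rho_add_natCast_inj (a := a) (b := b) hk hk

lemma rho_add_natCast_eq_rho_iff [NeZero N] {a b : ZMod N} {j : ℕ} (hj : j < k) :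
    rho N k b + j = rho N k a ↔ b = a ∧ j = 0 := by
  simpa using rho_add_natCast_inj (a := b) (b := a) hj (Nat.zero_lt_of_lt hj)

lemma rho_add_natCast_add_one_eq_rho_iff [NeZero N] {a b : ZMod N} {j : ℕ} (hj : j < k) :
    rho N k b + j + 1 = rho N k a ↔ b + 1 = a ∧ j = k - 1 := by
  simpa [eq_comm] using rho_add_natCast_add_one_eq_iff (a := b) (b := a) hj (Nat.zero_lt_of_lt hj)

end Crumbs

lemma sum_range_ite_or {V : Type*} [AddCommMonoid V] {k m n : ℕ} {p q : Prop} [Decidable p]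
    [Decidable q] (hm : m < k) (hn : n < k) (hpq : ¬(p ∧ q)) (c : V) :
    ∑ j ∈ Finset.range k, (if (p ∧ j = m) ∨ (q ∧ j = n) then c else 0)
      = if p ∨ q then c else 0 := by
  by_cases hp : p <;> by_cases hq : q <;> simp_all [Finset.sum_ite_eq']

noncomputable def iotaL (N k : ℕ) : EC N →ₗ[ℚ] EC (N * k) := linearCombination ℚ (iotaB N k)

section Crumbling

variable {N k : ℕ}

@[simp] lemma iotaL_single (u : B N) (c : ℚ) :
    iotaL N k (Finsupp.single u c) = c • iotaB N k u := by
  simp [iotaL]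

lemma iota3_eq_map3_iotaL (x : E3 N) : iota3 N k x = map3 (iotaL N k) x := by
  simp [iota3, map3, Finsupp.linearCombination_apply, t3_eq_t3L]

lemma iotaL_single_mem_homog (u : B N) : iotaL N k (Finsupp.single u 1) ∈ homog (N * k) u.cod := by
  rcases u with a | a | a <;> simp only [iotaL_single, one_smul, iotaB]
  · exact Finsupp.single_mem_supported ℚ _ rfl
  · exact Submodule.sum_mem _ fun j _ => Finsupp.single_mem_supported ℚ _ rfl
  · exact Finsupp.single_mem_supported ℚ _ rfl

lemma iotaL_bdB [NeZero N] (u : B N) : iotaL N k (B.bdB u) = bdL (N * k) (iotaB N k u) := by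
  rcases u with a | a | a
  · simp [iotaB, B.bdB]
  · simp only [iotaB, B.bdB, map_sum, bdL_single, map_sub, iotaL_single, one_smul]
    rw [rho_add, rho_one]
    simp_rw [add_assoc, ← Nat.cast_add_one]
    simpa using (Finset.sum_range_sub
      (fun j => Finsupp.single (B.P (rho N k a + (j : ZMod (N * k)))) (1 : ℚ)) k).symm
  · simp [iotaB, B.bdB]

lemma iotaL_bdL [NeZero N] (x : EC N) : iotaL N k (bdL N x) = bdL (N * k) (iotaL N k x) := by
  suffices iotaL N k ∘ₗ bdL N = bdL (N * k) ∘ₗ iotaL N k from congr($this x)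
  ext u : 2
  simp [iotaL_bdB]

lemma iotaL_muB_P_S (hN : 2 ≤ N) (hk : 0 < k) (a b : ZMod N) :
    iotaL N k (B.muB (B.P a) (B.S b)) = muL (N * k) (iotaB N k (B.P a)) (iotaB N k (B.S b)) := by
  have : NeZero N := ⟨by omega⟩
  have hcond (j : ℕ) (hj : j < k) :
      (rho N k b + j = rho N k a ∨ rho N k b + j = rho N k a - 1)
        ↔ (b = a ∧ j = 0) ∨ (b + 1 = a ∧ j = k - 1) := by
    rw [eq_sub_iff_add_eq, rho_add_natCast_eq_rho_iff hj, rho_add_natCast_add_one_eq_rho_iff hj]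
  have hexcl : ¬(b = a ∧ b + 1 = a) := fun ⟨h, h'⟩ => ZMod.add_one_ne_self hN b (h ▸ h')
  simp only [iotaB, map_sum, muL_single, B.muB]
  rw [Finset.sum_congr rfl fun j hj => if_congr (hcond j (Finset.mem_range.1 hj)) rfl rfl,
    sum_range_ite_or hk (Nat.sub_lt hk one_pos) hexcl]
  simp only [eq_sub_iff_add_eq]
  split_ifs <;> simp [iotaB]

lemma iotaL_muB_S_I (hN : 2 ≤ N) (hk : 0 < k) (a b : ZMod N) :
    iotaL N k (B.muB (B.S a) (B.I b)) = muL (N * k) (iotaB N k (B.S a)) (iotaB N k (B.I b)) := by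
  have : NeZero N := ⟨by omega⟩
  have hcond (i : ℕ) (hi : i < k) :
      (rho N k b = rho N k a + i ∨ rho N k b = rho N k a + i + 1)
        ↔ (b = a ∧ i = 0) ∨ (b = a + 1 ∧ i = k - 1) := by
    simp only [@eq_comm _ (rho N k b)]
    rw [rho_add_natCast_eq_rho_iff hi, rho_add_natCast_add_one_eq_rho_iff hi]
    simp only [@eq_comm _ a b, @eq_comm _ (a + 1) b]
  have hexcl : ¬(b = a ∧ b = a + 1) := fun ⟨h, h'⟩ => ZMod.add_one_ne_self hN a (h ▸ h').symm
  simp only [iotaB, map_sum, LinearMap.sum_apply, muL_single, B.muB]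
  rw [Finset.sum_congr rfl fun i hi => if_congr (hcond i (Finset.mem_range.1 hi)) rfl rfl,
    sum_range_ite_or hk (Nat.sub_lt hk one_pos) hexcl]
  split_ifs <;> simp [iotaB]

lemma iotaL_muB_P_I [NeZero N] (hk : 0 < k) (a b : ZMod N) :
    iotaL N k (B.muB (B.P a) (B.I b)) = muL (N * k) (iotaB N k (B.P a)) (iotaB N k (B.I b)) := by
  simp only [iotaB, muL_single, B.muB, rho_inj hk]
  split_ifs <;> simp [iotaB]

lemma iotaL_muB_I_I [NeZero N] (hk : 0 < k) (a b : ZMod N) :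
    iotaL N k (B.muB (B.I a) (B.I b)) = muL (N * k) (iotaB N k (B.I a)) (iotaB N k (B.I b)) := by
  simp only [iotaB, muL_single, B.muB, rho_inj hk]
  split_ifs <;> simp [iotaB]

lemma muB_S_rho_add_S_rho_add (hN : 3 ≤ N) (a b : ZMod N) {i j : ℕ} (hi : i < k) (hj : j < k) :
    B.muB (B.S (rho N k a + (i : ZMod (N * k)))) (B.S (rho N k b + (j : ZMod (N * k))))
      = (if b = a ∧ j = i then Finsupp.single (B.I (rho N k a + (i : ZMod (N * k)))) (-1)
            + Finsupp.single (B.S (rho N k a + (i : ZMod (N * k)))) 1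
            + Finsupp.single (B.I (rho N k a + (i : ZMod (N * k)) + 1)) (-1) else 0)
        + (if (a = b ∧ j = i + 1) ∨ (b = a + 1 ∧ i = k - 1 ∧ j = 0) then
            Finsupp.single (B.I (rho N k a + (i : ZMod (N * k)) + 1)) 1 else 0)
        + (if (b = a ∧ i = j + 1) ∨ (a = b + 1 ∧ j = k - 1 ∧ i = 0) then
            Finsupp.single (B.I (rho N k a + (i : ZMod (N * k)))) 1 else 0) := by
  have : NeZero N := ⟨by omega⟩
  rw [B.muB_S_S (le_trans hN (Nat.le_mul_of_pos_right N (Nat.zero_lt_of_lt hi)))]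
  simp only [rho_add_natCast_inj hj hi, @eq_comm _ (rho N k b + (j : ZMod (N * k))),
    rho_add_natCast_add_one_eq_iff hi hj, rho_add_natCast_add_one_eq_iff hj hi]

lemma iotaL_muB_S_S_self (hN : 3 ≤ N) (hk : 0 < k) (a : ZMod N) :
    iotaL N k (B.muB (B.S a) (B.S a)) = muL (N * k) (iotaB N k (B.S a)) (iotaB N k (B.S a)) := by
  have : Fact (1 < N) := ⟨by omega⟩
  obtain ⟨n, rfl⟩ : ∃ n, k = n + 1 := ⟨k - 1, by omega⟩
  set f : ℕ → EC (N * (n + 1)) := fun m => Finsupp.single (B.I (rho N (n + 1) a + m)) 1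
  set g : ℕ → EC (N * (n + 1)) := fun m => Finsupp.single (B.S (rho N (n + 1) a + m)) 1
  have key (i j : ℕ) (hi : i < n + 1) (hj : j < n + 1) :
      B.muB (B.S (rho N (n + 1) a + (i : ZMod (N * (n + 1)))))
          (B.S (rho N (n + 1) a + (j : ZMod (N * (n + 1)))))
        = (if j = i then g i - f i - f (i + 1) else 0) + (if j = i + 1 then f (i + 1) else 0)
          + (if i = j + 1 then f i else 0) := by
    rw [muB_S_rho_add_S_rho_add hN a a hi hj]
    simp [f, g, add_assoc, sub_eq_add_neg, add_left_comm]
  simp only [iotaB, map_sum, LinearMap.sum_apply, muL_single]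
  rw [Finset.sum_congr rfl fun j hj => Finset.sum_congr rfl fun i hi =>
    key i j (Finset.mem_range.1 hi) (Finset.mem_range.1 hj)]
  simp only [Finset.sum_add_distrib]
  rw [Finset.sum_comm (f := fun j i => if j = i + 1 then f (i + 1) else 0)]
  -- The two off-diagonal bands both contribute the interior vertices `f 1, …, f n`; the
  -- diagonal subtracts every vertex twice except the two ends.
  have hband : ∑ i ∈ Finset.range (n + 1), (if i + 1 ∈ Finset.range (n + 1) then f (i + 1) else 0)
      = ∑ i ∈ Finset.range n, f (i + 1) := by
    rw [Finset.sum_range_succ, if_neg (by simp), add_zero]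
    exact Finset.sum_congr rfl fun i hi => if_pos (by simp at hi ⊢; omega)
  simp only [Finset.sum_ite_eq, Finset.sum_ite_eq', Finset.sum_ite_mem, Finset.inter_self, hband,
    Finset.sum_sub_distrib]
  rw [Finset.sum_range_succ' f, Finset.sum_range_succ (fun i => f (i + 1))]
  have h0 : f 0 = Finsupp.single (B.I (rho N (n + 1) a)) 1 := by simp [f]
  have hlast : f (n + 1) = Finsupp.single (B.I (rho N (n + 1) (a + 1))) 1 := by
    simp [f, rho_add, rho_one]
  simp only [B.muB, ↓reduceIte, Finsupp.single_neg, map_add, map_neg, iotaL_single, iotaB,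
    one_smul, h0, hlast, g]
  abel

lemma iotaL_muB_S_S_add_one (hN : 3 ≤ N) (hk : 0 < k) (a : ZMod N) :
    iotaL N k (B.muB (B.S a) (B.S (a + 1)))
      = muL (N * k) (iotaB N k (B.S a)) (iotaB N k (B.S (a + 1))) := by
  have : Fact (1 < N) := ⟨by omega⟩
  have h₂ := ZMod.two_ne_zero_of_three_le hN
  simp only [iotaB, map_sum, LinearMap.sum_apply, muL_single]
  rw [Finset.sum_congr rfl fun j hj => Finset.sum_congr rfl fun i hi =>
    muB_S_rho_add_S_rho_add hN a (a + 1) (Finset.mem_range.1 hi) (Finset.mem_range.1 hj)]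
  simp [add_assoc, one_add_one_eq_two, h₂, B.muB, ite_and, Finset.sum_ite_eq', hk, iotaB, rho_add,
    rho_one]

lemma iotaL_muB_S_S_of_not_adjacent (hN : 3 ≤ N) {a b : ZMod N} (h₀ : b ≠ a) (h₁ : b ≠ a + 1)
    (h₂ : b + 1 ≠ a) :
    iotaL N k (B.muB (B.S a) (B.S b)) = muL (N * k) (iotaB N k (B.S a)) (iotaB N k (B.S b)) := by
  simp only [iotaB, map_sum, LinearMap.sum_apply, muL_single]
  rw [Finset.sum_congr rfl fun j hj => Finset.sum_congr rfl fun i hi =>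
    muB_S_rho_add_S_rho_add hN a b (Finset.mem_range.1 hi) (Finset.mem_range.1 hj)]
  simp [B.muB, h₀, h₁, eq_sub_iff_add_eq, h₂, Ne.symm h₀, Ne.symm h₂]

lemma iotaL_muB (hN : 3 ≤ N) (hk : 0 < k) (u v : B N) :
    iotaL N k (B.muB u v) = muL (N * k) (iotaB N k u) (iotaB N k v) := by
  have : NeZero N := ⟨by omega⟩
  have hNk : 3 ≤ N * k := le_trans hN (Nat.le_mul_of_pos_right N hk)
  have swap (u v : B N) (h : iotaL N k (B.muB u v) = muL (N * k) (iotaB N k u) (iotaB N k v)) :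
      iotaL N k (B.muB v u) = muL (N * k) (iotaB N k v) (iotaB N k u) := by
    rw [B.muB_comm hN, h, muL_comm hNk]
  rcases u with a | a | a <;> rcases v with b | b | b
  · simp [iotaB, B.muB]
  · exact iotaL_muB_P_S (by omega) hk a b
  · exact iotaL_muB_P_I hk a b
  · exact swap _ _ (iotaL_muB_P_S (by omega) hk b a)
  · by_cases h₀ : b = a
    · exact h₀ ▸ iotaL_muB_S_S_self hN hk a
    by_cases h₁ : b = a + 1
    · exact h₁ ▸ iotaL_muB_S_S_add_one hN hk a
    by_cases h₂ : b + 1 = a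
    · exact swap _ _ (h₂ ▸ iotaL_muB_S_S_add_one hN hk b)
    exact iotaL_muB_S_S_of_not_adjacent hN h₀ h₁ h₂
  · exact iotaL_muB_S_I (by omega) hk a b
  · exact swap _ _ (iotaL_muB_P_I hk b a)
  · exact swap _ _ (iotaL_muB_S_I (by omega) hk b a)
  · exact iotaL_muB_I_I hk a b

lemma iotaL_muL (hN : 3 ≤ N) (hk : 0 < k) (x y : EC N) :
    iotaL N k (muL N x y) = muL (N * k) (iotaL N k x) (iotaL N k y) := by
  suffices (muL N).compr₂ (iotaL N k) = (muL (N * k)).compl₁₂ (iotaL N k) (iotaL N k) from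
    congr($this x y)
  ext u v : 4
  simp [iotaL_muB hN hk]

end Crumbling

/-- the three-dimensional crumbling map commutes with the boundary
operator and with the intersection product. -/
theorem iota3_comm_bd3_mu3 (N : ℕ) (hN : 3 ≤ N) (k : ℕ) (hk : 1 ≤ k) :
    (∀ x : E3 N, iota3 N k (bd3 x) = bd3 (iota3 N k x)) ∧
    (∀ x y : E3 N, iota3 N k (mu3 x y) = mu3 (iota3 N k x) (iota3 N k y)) := by
  have : NeZero N := ⟨by omega⟩
  refine ⟨fun x => ?_, fun x y => ?_⟩
  · simp only [iota3_eq_map3_iotaL, bd3_eq_bd3L]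
    exact map3_bd3L iotaL_single_mem_homog iotaL_bdL x
  · simp only [iota3_eq_map3_iotaL, mu3_eq_mu3L]
    exact map3_mu3L iotaL_single_mem_homog (iotaL_muL hN hk) x y
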